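/- Let A_1 = [[0,1,0],[1,0,−1],[0,−1,0]] and for k ≥ 1 let A_{k+1} = A_1 ⊗ I_{3^k} + diag(1,−1,1) ⊗ A_k (Kronecker products), a symmetric 3^k × 3^k matrix for each k. Then for every k ≥ 1: (i) 0 is an eigenvalue of A_k and has multiplicity 1 as a root of the characteristic polynomial of A_k; (ii) if λ is an eigenvalue of A_k then so is −λ; (iii) every positive eigenvalue of A_k is at least √2, and √2 is an eigenvalue of A_k. -/

import Mathlib

open Kronecker Matrix

/-- A matrix `M` has real eigenvalue `μ` if `M x = μ x` for some nonzero vector `x`. -/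
def HasEig {I : Type*} [Fintype I] (M : Matrix I I ℝ) (μ : ℝ) : Prop :=
  ∃ x : I → ℝ, x ≠ 0 ∧ M.mulVec x = μ • x

/-- `A_1 = [[0,1,0],[1,0,−1],[0,−1,0]]`, a signed adjacency matrix of `P_3`. -/
def matA1 : Matrix (Fin 3) (Fin 3) ℝ := !![0, 1, 0; 1, 0, -1; 0, -1, 0]

/-- `D = diag(1,−1,1)`. -/
def matD3 : Matrix (Fin 3) (Fin 3) ℝ := !![1, 0, 0; 0, -1, 0; 0, 0, 1]

/-- The signed adjacency matrices of `P_3^k`: `AP3 0 = A_1` and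
`AP3 (k+1) = A_1 ⊗ I_{3^k} + D ⊗ AP3 k` (Kronecker products), so `AP3 k` is the
matrix `A_{k+1}` of the paper; it is indexed by `Fin (k+1) → Fin 3`, a type of
cardinality `3^(k+1)`. -/
noncomputable def AP3 : (k : ℕ) → Matrix (Fin (k + 1) → Fin 3) (Fin (k + 1) → Fin 3) ℝ
  | 0 => Matrix.reindex (Equiv.funUnique (Fin 1) (Fin 3)).symm
      (Equiv.funUnique (Fin 1) (Fin 3)).symm matA1
  | (k + 1) =>
      Matrix.reindex (Fin.consEquiv fun _ : Fin (k + 2) => Fin 3)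
        (Fin.consEquiv fun _ : Fin (k + 2) => Fin 3)
        (matA1 ⊗ₖ (1 : Matrix (Fin (k + 1) → Fin 3) (Fin (k + 1) → Fin 3) ℝ)
          + matD3 ⊗ₖ AP3 k)

/-!
Write a vector on `Fin 3 × n` as three slices `(x₀, x₁, x₂)`. Since `D` anticommutes with `A_1`,
the involution `D ⊗ ⋯ ⊗ D` anticommutes with `A_k`, so the spectrum is symmetric. If
`A_{k+1} x = λ x`, the block form of `A_{k+1}` gives `A_k² x₁ = (λ² - 2) x₁`; as `A_k` is
symmetric, `A_k²` is positive semidefinite, so either `x₁ ≠ 0` and `λ² ≥ 2`, or `x₁ = 0`,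
`x₀ = x₂` and `x₀` is an eigenvector of `A_k` for `λ`. For `λ = 0` only the second case is
possible, so `ker A_{k+1} = (1, 0, 1) ⊗ ker A_k` is a line, and by symmetry the algebraic
multiplicity of `0` equals this geometric one. If `z` spans `ker A_k`, then `(1, √2, -1) ⊗ z` is
an eigenvector for `√2`. Everything starts from `A_1 = A_1 ⊗ I_1 + D ⊗ 0`, one step of the
recursion applied to the `1 × 1` zero matrix.
-/

noncomputable def p3Prod {n : Type*} [DecidableEq n] (B : Matrix n n ℝ) :
    Matrix (Fin 3 × n) (Fin 3 × n) ℝ :=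
  matA1 ⊗ₖ 1 + matD3 ⊗ₖ B

def kronVec {R m n : Type*} [Mul R] (u : m → R) (v : n → R) : m × n → R :=
  fun p => u p.1 * v p.2

lemma kronVec_ne_zero {R m n : Type*} [MulZeroClass R] [NoZeroDivisors R] {u : m → R}
    {v : n → R} (hu : u ≠ 0) (hv : v ≠ 0) : kronVec u v ≠ 0 := by
  obtain ⟨i, hi⟩ := Function.ne_iff.mp hu
  obtain ⟨j, hj⟩ := Function.ne_iff.mp hv
  exact Function.ne_iff.mpr ⟨(i, j), mul_ne_zero hi hj⟩

lemma kronecker_mulVec_kronVec {R l m n o : Type*} [CommSemiring R] [Fintype m] [Fintype o]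
    (A : Matrix l m R) (B : Matrix n o R) (u : m → R) (v : o → R) :
    (A ⊗ₖ B) *ᵥ kronVec u v = kronVec (A *ᵥ u) (B *ᵥ v) := by
  ext ⟨i, j⟩
  simp only [kronVec, mulVec, dotProduct, kroneckerMap_apply, Fintype.sum_prod_type,
    Finset.sum_mul_sum]
  exact Finset.sum_congr rfl fun _ _ => Finset.sum_congr rfl fun _ _ => by ring

lemma Matrix.IsSymm.kronecker {R l m : Type*} [CommMagma R] {A : Matrix l l R}
    {B : Matrix m m R} (hA : A.IsSymm) (hB : B.IsSymm) : (A ⊗ₖ B).IsSymm := by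
  rw [IsSymm, ← kroneckerMap_transpose, hA.eq, hB.eq]

lemma isSymm_matA1 : matA1.IsSymm := by
  ext i j; fin_cases i <;> fin_cases j <;> rfl

lemma isSymm_matD3 : matD3.IsSymm := by
  ext i j; fin_cases i <;> fin_cases j <;> rfl

lemma matD3_mul_self : matD3 * matD3 = 1 := by
  ext i j; fin_cases i <;> fin_cases j <;> simp [matD3, mul_apply, Fin.sum_univ_three, one_apply]

lemma matD3_mul_matA1_add_matA1_mul_matD3 : matD3 * matA1 + matA1 * matD3 = 0 := by
  ext i j; fin_cases i <;> fin_cases j <;> simp [matD3, matA1]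

lemma matA1_mulVec_ker : matA1 *ᵥ ![1, 0, 1] = 0 := by
  ext i; fin_cases i <;> simp [matA1, mulVec, dotProduct, Fin.sum_univ_three]

lemma matA1_hasEig_sqrt_two : HasEig matA1 √2 := by
  refine ⟨![1, √2, -1], Function.ne_iff.mpr ⟨0, by simp⟩, ?_⟩
  ext i; fin_cases i <;> simp [matA1, mulVec, dotProduct, Fin.sum_univ_three, one_add_one_eq_two]

lemma HasEig.reindex {m n : Type*} [Fintype m] [Fintype n] {B : Matrix m m ℝ} {μ : ℝ}
    (h : HasEig B μ) (e : m ≃ n) : HasEig (reindex e e B) μ := by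
  obtain ⟨x, hx0, hx⟩ := h
  refine ⟨x ∘ e.symm, fun h => hx0 ?_, ?_⟩
  · ext i; simpa using congrFun h (e i)
  · rw [reindex_apply, submatrix_mulVec_equiv, Equiv.symm_symm, Function.comp_assoc,
      e.symm_comp_self, Function.comp_id, hx]
    rfl

lemma hasEig_reindex_iff {m n : Type*} [Fintype m] [Fintype n] (e : m ≃ n) (B : Matrix m m ℝ)
    (μ : ℝ) : HasEig (reindex e e B) μ ↔ HasEig B μ :=
  ⟨fun h => by simpa using h.reindex e.symm, fun h => h.reindex e⟩

def AnticommutesWithInvolution {n : Type*} [Fintype n] [DecidableEq n] (B : Matrix n n ℝ) :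
    Prop :=
  ∃ E : Matrix n n ℝ, E * E = 1 ∧ E * B + B * E = 0

lemma HasEig.neg {n : Type*} [Fintype n] [DecidableEq n] {B : Matrix n n ℝ} {μ : ℝ}
    (h : HasEig B μ) (hB : AnticommutesWithInvolution B) : HasEig B (-μ) := by
  obtain ⟨x, hx0, hx⟩ := h
  obtain ⟨E, hE, hEB⟩ := hB
  refine ⟨E *ᵥ x, fun h => hx0 ?_, ?_⟩
  · rw [← one_mulVec x, ← hE, ← mulVec_mulVec, h, mulVec_zero]
  · rw [mulVec_mulVec, eq_neg_of_add_eq_zero_right hEB, neg_mulVec, ← mulVec_mulVec, hx,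
      mulVec_smul, neg_smul]

lemma AnticommutesWithInvolution.reindex {m n : Type*} [Fintype m] [DecidableEq m] [Fintype n]
    [DecidableEq n] {B : Matrix m m ℝ} (hB : AnticommutesWithInvolution B) (e : m ≃ n) :
    AnticommutesWithInvolution (reindex e e B) := by
  obtain ⟨E, hE, hEB⟩ := hB
  refine ⟨Matrix.reindex e e E, ?_⟩
  simp only [← coe_reindexAlgEquiv ℝ ℝ, ← map_mul, ← map_add, hE, hEB, map_one, map_zero, and_self]

namespace Matrix

variable {n : Type*} [Fintype n] {B : Matrix n n ℝ}

lemma IsSymm.dotProduct_mulVec_comm (hB : B.IsSymm) (x y : n → ℝ) :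
    x ⬝ᵥ (B *ᵥ y) = (B *ᵥ x) ⬝ᵥ y := by
  rw [dotProduct_mulVec, ← mulVec_transpose, hB.eq]

lemma IsSymm.nonneg_of_mulVec_mulVec_eq_smul (hB : B.IsSymm) {x : n → ℝ} {c : ℝ} (hx : x ≠ 0)
    (h : B *ᵥ (B *ᵥ x) = c • x) : 0 ≤ c := by
  have hxx : 0 < x ⬝ᵥ x := by simpa using dotProduct_star_self_pos_iff.mpr hx
  have hBx : 0 ≤ (B *ᵥ x) ⬝ᵥ (B *ᵥ x) := by simpa using dotProduct_star_self_nonneg (B *ᵥ x)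
  have hquad : c * (x ⬝ᵥ x) = (B *ᵥ x) ⬝ᵥ (B *ᵥ x) := by
    rw [← smul_eq_mul, ← dotProduct_smul, ← h, hB.dotProduct_mulVec_comm]
  exact nonneg_of_mul_nonneg_left (hquad ▸ hBx) hxx

lemma IsSymm.mulVec_eq_zero_of_mulVec_mulVec_eq_zero (hB : B.IsSymm) {x : n → ℝ}
    (h : B *ᵥ (B *ᵥ x) = 0) : B *ᵥ x = 0 := by
  rw [← dotProduct_self_eq_zero, ← hB.dotProduct_mulVec_comm, h, dotProduct_zero]

variable [DecidableEq n]

lemma IsSymm.mulVec_eq_zero_of_pow_mulVec_eq_zero (hB : B.IsSymm) {x : n → ℝ} :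
    ∀ {k : ℕ}, (B ^ k) *ᵥ x = 0 → B *ᵥ x = 0
  | 0, h => by rw [pow_zero, one_mulVec] at h; rw [h, mulVec_zero]
  | k + 1, h => by
    rw [pow_succ, ← mulVec_mulVec] at h
    exact hB.mulVec_eq_zero_of_mulVec_mulVec_eq_zero (hB.mulVec_eq_zero_of_pow_mulVec_eq_zero h)

lemma IsSymm.maxGenEigenspace_zero_eq_ker (hB : B.IsSymm) :
    Module.End.maxGenEigenspace (toLin' B) 0 = LinearMap.ker (toLin' B) := by
  ext x
  simp only [Module.End.mem_maxGenEigenspace, zero_smul, sub_zero, ← toLin'_pow, toLin'_apply,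
    LinearMap.mem_ker]
  exact ⟨fun ⟨_, hk⟩ => hB.mulVec_eq_zero_of_pow_mulVec_eq_zero hk, fun h => ⟨1, by simpa⟩⟩

lemma IsSymm.rootMultiplicity_zero_charpoly (hB : B.IsSymm) {z : n → ℝ} (hz : z ≠ 0)
    (hker : LinearMap.ker (toLin' B) = ℝ ∙ z) : B.charpoly.rootMultiplicity 0 = 1 := by
  rw [← charpoly_toLin', ← LinearMap.finrank_maxGenEigenspace_eq,
    hB.maxGenEigenspace_zero_eq_ker, hker, finrank_span_singleton hz]

lemma mulVec_eq_zero_of_ker_eq_span {z : n → ℝ} (hker : LinearMap.ker (toLin' B) = ℝ ∙ z) :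
    B *ᵥ z = 0 := by
  simpa [← hker] using Submodule.mem_span_singleton_self (R := ℝ) z

end Matrix

section p3Prod

variable {n : Type*} [DecidableEq n] {B : Matrix n n ℝ}

lemma isSymm_p3Prod (hB : B.IsSymm) : (p3Prod B).IsSymm :=
  (isSymm_matA1.kronecker isSymm_one).add (isSymm_matD3.kronecker hB)

variable [Fintype n]

lemma AnticommutesWithInvolution.p3Prod (hB : AnticommutesWithInvolution B) :
    AnticommutesWithInvolution (p3Prod B) := by
  obtain ⟨E, hE, hEB⟩ := hB
  refine ⟨matD3 ⊗ₖ E, ?_, ?_⟩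
  · rw [← mul_kronecker_mul, matD3_mul_self, hE, one_kronecker_one]
  · simp only [_root_.p3Prod, mul_add, add_mul, ← mul_kronecker_mul, mul_one, one_mul]
    rw [add_add_add_comm, ← add_kronecker, ← kronecker_add,
      matD3_mul_matA1_add_matA1_mul_matD3, matD3_mul_self, hEB, zero_kronecker, kronecker_zero,
      add_zero]

lemma p3Prod_mulVec_kronVec {u : Fin 3 → ℝ} {z : n → ℝ} {μ : ℝ} (hu : matA1 *ᵥ u = μ • u)
    (hz : B *ᵥ z = 0) : p3Prod B *ᵥ kronVec u z = μ • kronVec u z := by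
  rw [p3Prod, add_mulVec, kronecker_mulVec_kronVec, kronecker_mulVec_kronVec, hu, hz,
    one_mulVec]
  ext p
  simp [kronVec, mul_assoc]

lemma hasEig_p3Prod {μ : ℝ} (hA : HasEig matA1 μ) (hB : HasEig B 0) : HasEig (p3Prod B) μ := by
  obtain ⟨u, hu0, hu⟩ := hA
  obtain ⟨z, hz0, hz⟩ := hB
  exact ⟨kronVec u z, kronVec_ne_zero hu0 hz0,
    p3Prod_mulVec_kronVec hu (by rw [hz, zero_smul])⟩

open Function

lemma p3Prod_mulVec_apply_zero (v : Fin 3 × n → ℝ) (t : n) :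
    (p3Prod B *ᵥ v) (0, t) = (B *ᵥ curry v 0) t + v (1, t) := by
  simp [p3Prod, mulVec, dotProduct, Fintype.sum_prod_type, Fin.sum_univ_three, matA1, matD3,
    one_apply]

lemma p3Prod_mulVec_apply_one (v : Fin 3 × n → ℝ) (t : n) :
    (p3Prod B *ᵥ v) (1, t) = v (0, t) - (B *ᵥ curry v 1) t - v (2, t) := by
  simp [p3Prod, mulVec, dotProduct, Fintype.sum_prod_type, Fin.sum_univ_three, matA1, matD3,
    one_apply, ← sub_eq_add_neg]

lemma p3Prod_mulVec_apply_two (v : Fin 3 × n → ℝ) (t : n) :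
    (p3Prod B *ᵥ v) (2, t) = -v (1, t) + (B *ᵥ curry v 2) t := by
  simp [p3Prod, mulVec, dotProduct, Fintype.sum_prod_type, Fin.sum_univ_three, matA1, matD3,
    one_apply]

lemma p3Prod_mulVec_eq_smul {v : Fin 3 × n → ℝ} {μ : ℝ} (h : p3Prod B *ᵥ v = μ • v) :
    B *ᵥ curry v 0 = μ • curry v 0 - curry v 1 ∧
    B *ᵥ curry v 1 = curry v 0 - curry v 2 - μ • curry v 1 ∧
    B *ᵥ curry v 2 = curry v 1 + μ • curry v 2 := by
  have hv : ∀ p, (p3Prod B *ᵥ v) p = μ * v p := fun p => by rw [h]; rfl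
  refine ⟨funext fun t => ?_, funext fun t => ?_, funext fun t => ?_⟩ <;>
    simp only [Pi.add_apply, Pi.sub_apply, Pi.smul_apply, smul_eq_mul, curry_apply]
  · linarith [p3Prod_mulVec_apply_zero (B := B) v t, hv (0, t)]
  · linarith [p3Prod_mulVec_apply_one (B := B) v t, hv (1, t)]
  · linarith [p3Prod_mulVec_apply_two (B := B) v t, hv (2, t)]

lemma p3Prod_eigenvector_cases (hB : B.IsSymm) {v : Fin 3 × n → ℝ} {μ : ℝ}
    (hv : p3Prod B *ᵥ v = μ • v) :
    2 ≤ μ ^ 2 ∨ curry v 1 = 0 ∧ curry v 2 = curry v 0 ∧ B *ᵥ curry v 0 = μ • curry v 0 := by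
  obtain ⟨h0, h1, h2⟩ := p3Prod_mulVec_eq_smul hv
  by_cases hv1 : curry v 1 = 0
  · rw [hv1, mulVec_zero, smul_zero, sub_zero, eq_comm, sub_eq_zero] at h1
    exact Or.inr ⟨hv1, h1.symm, by rw [h0, hv1, sub_zero]⟩
  · have hsq : B *ᵥ (B *ᵥ curry v 1) = (μ ^ 2 - 2) • curry v 1 := by
      rw [h1, mulVec_sub, mulVec_sub, mulVec_smul, h0, h1, h2]
      module
    exact Or.inl (by linarith [hB.nonneg_of_mulVec_mulVec_eq_smul hv1 hsq])

lemma p3Prod_eigenvalue_gap (hB : B.IsSymm) (hgap : ∀ μ, HasEig B μ → μ = 0 ∨ 2 ≤ μ ^ 2)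
    {μ : ℝ} (h : HasEig (p3Prod B) μ) : μ = 0 ∨ 2 ≤ μ ^ 2 := by
  obtain ⟨v, hv0, hv⟩ := h
  rcases p3Prod_eigenvector_cases hB hv with hμ | ⟨h1, h2, h0⟩
  · exact Or.inr hμ
  · refine hgap μ ⟨curry v 0, fun h => hv0 ?_, h0⟩
    ext ⟨i, t⟩
    fin_cases i
    · exact congrFun h t
    · exact congrFun h1 t
    · exact (congrFun h2 t).trans (congrFun h t)

lemma ker_p3Prod (hB : B.IsSymm) {z : n → ℝ} (hker : LinearMap.ker (toLin' B) = ℝ ∙ z) :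
    LinearMap.ker (toLin' (p3Prod B)) = ℝ ∙ kronVec ![1, 0, 1] z := by
  refine le_antisymm (fun v hv => ?_) ?_
  · rw [LinearMap.mem_ker, toLin'_apply] at hv
    rcases p3Prod_eigenvector_cases hB (hv.trans (zero_smul ℝ v).symm) with h | ⟨h1, h2, h0⟩
    · norm_num at h
    · rw [zero_smul, ← toLin'_apply, ← LinearMap.mem_ker, hker,
        Submodule.mem_span_singleton] at h0
      obtain ⟨c, hc⟩ := h0
      refine Submodule.mem_span_singleton.mpr ⟨c, ?_⟩
      ext ⟨i, t⟩
      fin_cases i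
      · simpa [kronVec] using congrFun hc t
      · simpa [kronVec] using (congrFun h1 t).symm
      · simpa [kronVec] using (congrFun hc t).trans (congrFun h2 t).symm
  · rw [Submodule.span_singleton_le_iff_mem, LinearMap.mem_ker, toLin'_apply,
      p3Prod_mulVec_kronVec (μ := 0) (by rw [matA1_mulVec_ker, zero_smul])
        (mulVec_eq_zero_of_ker_eq_span hker), zero_smul]

end p3Prod

lemma AP3_zero_eq :
    AP3 0 = reindex ((Equiv.prodPUnit (Fin 3)).trans (Equiv.funUnique (Fin 1) (Fin 3)).symm)
      ((Equiv.prodPUnit (Fin 3)).trans (Equiv.funUnique (Fin 1) (Fin 3)).symm)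
      (p3Prod (0 : Matrix Unit Unit ℝ)) := by
  ext x y
  simp [AP3, p3Prod]

lemma AP3_succ_eq (k : ℕ) :
    AP3 (k + 1) = reindex (Fin.consEquiv fun _ => Fin 3) (Fin.consEquiv fun _ => Fin 3)
      (p3Prod (AP3 k)) :=
  rfl

lemma AP3_isSymm (k : ℕ) : (AP3 k).IsSymm := by
  induction k with
  | zero => rw [AP3_zero_eq]; exact (isSymm_p3Prod isSymm_zero).reindex _
  | succ k ih => rw [AP3_succ_eq]; exact (isSymm_p3Prod ih).reindex _

theorem AP3_induction (P : ∀ (n : Type) [Fintype n] [DecidableEq n], Matrix n n ℝ → Prop)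
    (h0 : P Unit 0)
    (hstep : ∀ (n : Type) [Fintype n] [DecidableEq n] (B : Matrix n n ℝ), B.IsSymm → P n B →
      P (Fin 3 × n) (p3Prod B))
    (hreindex : ∀ (m n : Type) [Fintype m] [DecidableEq m] [Fintype n] [DecidableEq n]
      (e : m ≃ n) (B : Matrix m m ℝ), P m B → P n (reindex e e B))
    (k : ℕ) : P _ (AP3 k) := by
  induction k with
  | zero => rw [AP3_zero_eq]; exact hreindex _ _ _ _ (hstep _ _ isSymm_zero h0)
  | succ k ih => rw [AP3_succ_eq]; exact hreindex _ _ _ _ (hstep _ _ (AP3_isSymm k) ih)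

lemma AP3_anticommutesWithInvolution (k : ℕ) : AnticommutesWithInvolution (AP3 k) :=
  AP3_induction (fun _ _ _ B => AnticommutesWithInvolution B) ⟨1, by simp⟩
    (fun _ _ _ _ _ hB => hB.p3Prod) (fun _ _ _ _ _ _ e _ hB => hB.reindex e) k

lemma AP3_eigenvalue_gap (k : ℕ) {μ : ℝ} (h : HasEig (AP3 k) μ) : μ = 0 ∨ 2 ≤ μ ^ 2 := by
  refine AP3_induction (fun _ _ _ B => ∀ μ, HasEig B μ → μ = 0 ∨ 2 ≤ μ ^ 2) ?_
    (fun _ _ _ _ hB hgap _ => p3Prod_eigenvalue_gap hB hgap)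
    (fun _ _ _ _ _ _ e B hgap μ h => hgap μ ((hasEig_reindex_iff e B μ).mp h)) k μ h
  rintro μ ⟨x, hx0, hx⟩
  rw [zero_mulVec, eq_comm, smul_eq_zero] at hx
  exact Or.inl (hx.resolve_right hx0)

lemma AP3_ker (k : ℕ) : ∃ z, z ≠ 0 ∧ LinearMap.ker (toLin' (AP3 k)) = ℝ ∙ z := by
  refine AP3_induction (fun _ _ _ B => ∃ z, z ≠ 0 ∧ LinearMap.ker (toLin' B) = ℝ ∙ z)
    ⟨1, one_ne_zero, ?_⟩
    (fun _ _ _ _ hB ⟨z, hz0, hz⟩ => ⟨_, kronVec_ne_zero (by simp) hz0, ker_p3Prod hB hz⟩)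
    (fun _ _ _ _ _ _ e B ⟨z, hz0, hz⟩ =>
      ⟨LinearEquiv.funCongrLeft ℝ ℝ e.symm z, (LinearEquiv.map_ne_zero_iff _).mpr hz0, ?_⟩) k
  · rw [map_zero, LinearMap.ker_zero, eq_comm, Submodule.eq_top_iff']
    exact fun x => Submodule.mem_span_singleton.mpr ⟨x (), by ext ⟨⟩; simp⟩
  · rw [toLin'_reindex, LinearEquiv.ker_comp, LinearMap.ker_comp, hz,
      Submodule.comap_equiv_eq_map_symm, Submodule.map_span, Set.image_singleton]
    rfl

lemma AP3_hasEig_zero (k : ℕ) : HasEig (AP3 k) 0 := by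
  obtain ⟨z, hz0, hker⟩ := AP3_ker k
  exact ⟨z, hz0, by rw [mulVec_eq_zero_of_ker_eq_span hker, zero_smul]⟩

lemma AP3_hasEig_sqrt_two (k : ℕ) : HasEig (AP3 k) √2 := by
  cases k with
  | zero =>
    rw [AP3_zero_eq, hasEig_reindex_iff]
    exact hasEig_p3Prod matA1_hasEig_sqrt_two ⟨1, one_ne_zero, by simp⟩
  | succ k =>
    rw [AP3_succ_eq, hasEig_reindex_iff]
    exact hasEig_p3Prod matA1_hasEig_sqrt_two (AP3_hasEig_zero k)

theorem AP3_eigenvalues (k : ℕ) :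
    (HasEig (AP3 k) 0 ∧ Polynomial.rootMultiplicity (0 : ℝ) (AP3 k).charpoly = 1) ∧
    (∀ lam : ℝ, HasEig (AP3 k) lam → HasEig (AP3 k) (-lam)) ∧
    ((∀ lam : ℝ, HasEig (AP3 k) lam → 0 < lam → Real.sqrt 2 ≤ lam) ∧
      HasEig (AP3 k) (Real.sqrt 2)) := by
  obtain ⟨z, hz0, hker⟩ := AP3_ker k
  refine ⟨⟨AP3_hasEig_zero k, (AP3_isSymm k).rootMultiplicity_zero_charpoly hz0 hker⟩,
    fun μ h => h.neg (AP3_anticommutesWithInvolution k), ⟨fun μ h hμ => ?_, AP3_hasEig_sqrt_two k⟩⟩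
  rcases AP3_eigenvalue_gap k h with rfl | h2
  · exact absurd hμ (lt_irrefl 0)
  · exact (Real.sqrt_le_left hμ.le).mpr h2
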